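/- The ideal J is stable under the operation θ^p, i.e. for every f ∈ J one has f^p − φ(f) ∈ p·J (equivalently, there exists g ∈ J with p·g = f^p − φ(f)). -/

import Mathlib

open MvPolynomial

/-- The ideal `(p) ⊆ ℤ` is prime when `p` is a prime number. -/
instance spanIntPrime (p : ℕ) [hp : Fact p.Prime] : (Ideal.span {(p : ℤ)}).IsPrime :=
  (Ideal.span_singleton_prime (by exact_mod_cast hp.out.ne_zero)).mpr
    (Nat.prime_iff_prime_int.mp hp.out)

/-- `K = ℤ_(p)`, the localization of `ℤ` at the prime ideal `(p)`. -/
abbrev Kloc (p : ℕ) [Fact p.Prime] : Type :=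
  Localization.AtPrime (Ideal.span {(p : ℤ)})

/-- `R = K[x,y]`, the polynomial ring in two variables (`x = X 0`, `y = X 1`) over `K`. -/
abbrev Rpoly (p : ℕ) [Fact p.Prime] : Type :=
  MvPolynomial (Fin 2) (Kloc p)

/-- The polynomials `F_n ∈ ℤ[s,t]` (with `s = X 0`, `t = X 1`), defined recursively by
`F_0(s,t) = s` and `F_n(s,t) = F_{n-1}(s,t)^p - p · F_{n-1}(t,0)`. -/
noncomputable def F (p : ℕ) : ℕ → MvPolynomial (Fin 2) ℤ
  | 0 => X 0
  | n + 1 => F p n ^ p - (p : MvPolynomial (Fin 2) ℤ) * (aeval ![X 1, 0] (F p n))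

/-- `F_n(x,y) ∈ R`: the image of `F_n` under the evaluation `s ↦ x`, `t ↦ y`. -/
noncomputable def Fxy (p : ℕ) [Fact p.Prime] (n : ℕ) : Rpoly p :=
  MvPolynomial.map (Int.castRingHom (Kloc p)) (F p n)

/-!
Write `θ(f) = (f^p - φ f) / p`. The map `φ` lifts Frobenius (`φ a ≡ a^p mod p`: on `ℤ_(p)`
by Fermat, on `x` and `y` by inspection), so the identities
`θ(f + g) = θ f + θ g + (a multiple of f g)` and `θ(a f) = a^p θ f + φ f · θ a` show that
an ideal `I` with `φ(I) ⊆ I` is `θ`-stable as soon as `θ` of each generator lies in it.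
For `J` everything follows from `φ(F_n) = F_{n+1} = F_n^p - p y^{p^n}`: it gives `φ(J) ⊆ J`,
`θ(F_e) = y^{p^e}`, `θ(y^{p^e}) = 0`, and `θ(p^k F_n) = p^{kp-1} F_n^p - p^{k-1} F_{n+1} ∈ J`
for `k = e - n ≥ 1`.
-/

variable {R : Type*} [CommRing R]

def HasThetaIn (p : ℕ) (φ : R →+* R) (I : Ideal R) (f : R) : Prop :=
  ∃ g ∈ I, (p : R) * g = f ^ p - φ f

def IsFrobeniusLift (p : ℕ) (φ : R →+* R) : Prop :=
  ∀ a, HasThetaIn p φ ⊤ a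

namespace HasThetaIn

variable {p : ℕ} {φ : R →+* R} {I : Ideal R} {f g a : R}

theorem zero (hp : p ≠ 0) : HasThetaIn p φ I 0 :=
  ⟨0, I.zero_mem, by simp [zero_pow hp]⟩

theorem add (hp : p.Prime) (hfI : f ∈ I) (hf : HasThetaIn p φ I f) (hg : HasThetaIn p φ I g) :
    HasThetaIn p φ I (f + g) := by
  obtain ⟨u, huI, hu⟩ := hf
  obtain ⟨v, hvI, hv⟩ := hg
  obtain ⟨r, hr⟩ := exists_add_pow_prime_eq hp f g
  refine ⟨u + v + f * g * r,
    add_mem (add_mem huI hvI) (I.mul_mem_right _ (I.mul_mem_right _ hfI)), ?_⟩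
  rw [hr, map_add]
  linear_combination hu + hv

theorem mul (ha : HasThetaIn p φ ⊤ a) (hf : HasThetaIn p φ I f) (hφf : φ f ∈ I) :
    HasThetaIn p φ I (a * f) := by
  obtain ⟨u, -, hu⟩ := ha
  obtain ⟨v, hvI, hv⟩ := hf
  refine ⟨a ^ p * v + φ f * u, add_mem (I.mul_mem_left _ hvI) (I.mul_mem_right _ hφf), ?_⟩
  rw [map_mul, mul_pow]
  linear_combination a ^ p * hv + φ f * hu

theorem of_mem_span (hp : p.Prime) (hφ : IsFrobeniusLift p φ) {S : Set R}
    (hmap : ∀ s ∈ S, φ s ∈ Ideal.span S) (hS : ∀ s ∈ S, HasThetaIn p φ (Ideal.span S) s)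
    (hf : f ∈ Ideal.span S) : HasThetaIn p φ (Ideal.span S) f := by
  have hle : Ideal.span S ≤ (Ideal.span S).comap φ := Ideal.span_le.mpr hmap
  induction hf using Submodule.span_induction with
  | mem s hs => exact hS s hs
  | zero => exact zero hp.ne_zero
  | add x y hx _ hθx hθy => exact add hp hx hθx hθy
  | smul a x hx hθx => exact mul (hφ a) hθx (hle hx)

theorem natCast_pow_mul (hp : 2 ≤ p) {k : ℕ} (ha : (p : R) ^ (k + 1) * a ∈ I)
    (hφa : (p : R) ^ k * φ a ∈ I) : HasThetaIn p φ I ((p : R) ^ (k + 1) * a) := by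
  obtain ⟨m, rfl⟩ : ∃ m, p = m + 2 := ⟨p - 2, by omega⟩
  refine ⟨((m + 2 : ℕ) : R) ^ ((k + 1) * m + k) * a ^ (m + 1) *
      (((m + 2 : ℕ) : R) ^ (k + 1) * a) - ((m + 2 : ℕ) : R) ^ k * φ a,
    sub_mem (I.mul_mem_left _ ha) hφa, ?_⟩
  rw [map_mul, map_pow, map_natCast]
  ring

end HasThetaIn

namespace IsFrobeniusLift

theorem int_id {p : ℕ} (hp : p.Prime) : IsFrobeniusLift p (RingHom.id ℤ) := fun a =>
  let ⟨b, hb⟩ := Int.prime_dvd_pow_self_sub hp a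
  ⟨b, trivial, hb.symm⟩

theorem localization_id {A : Type*} [CommRing A] {p : ℕ} (h : IsFrobeniusLift p (RingHom.id A))
    (M : Submonoid A) : IsFrobeniusLift p (RingHom.id (Localization M)) := by
  intro a
  induction a using Localization.induction_on with
  | H xs =>
    obtain ⟨x, s⟩ := xs
    obtain ⟨u, -, hu⟩ := h x
    obtain ⟨v, -, hv⟩ := h s
    -- `s x^p - s^p x = s (x^p - x) - x (s^p - s)` is divisible by `p` in `A`
    refine ⟨Localization.mk (s * u - x * v) (s ^ p * s), trivial, ?_⟩
    rw [RingHom.id_apply, Localization.mk_pow, Localization.sub_mk,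
      ← Localization.mk_natCast (M := M) p, Localization.mk_mul, one_mul]
    congr 1
    simp only [RingHom.id_apply] at hu hv
    push_cast
    linear_combination (s : A) * hu - x * hv

theorem mvPolynomial {σ A : Type*} [CommRing A] {p : ℕ} (hp : p.Prime)
    (hA : IsFrobeniusLift p (RingHom.id A)) (φ : MvPolynomial σ A →ₐ[A] MvPolynomial σ A)
    (hX : ∀ i, HasThetaIn p (φ : MvPolynomial σ A →+* MvPolynomial σ A) ⊤ (X i)) :
    IsFrobeniusLift p (φ : MvPolynomial σ A →+* MvPolynomial σ A) := by
  intro f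
  induction f using MvPolynomial.induction_on with
  | C a =>
    obtain ⟨b, -, hb⟩ := hA a
    refine ⟨C b, trivial, ?_⟩
    rw [RingHom.coe_coe, ← algebraMap_eq, AlgHom.commutes, algebraMap_eq, ← map_pow,
      ← map_natCast C, ← map_mul, ← map_sub, hb, RingHom.id_apply]
  | add f g hf hg => exact hf.add hp trivial hg
  | mul_X f i hf => exact hf.mul (hX i) trivial

end IsFrobeniusLift

section

variable (p : ℕ) [hp : Fact p.Prime]

theorem aeval_X_one_zero_F (n : ℕ) :
    aeval ![(X 1 : MvPolynomial (Fin 2) ℤ), 0] (F p n) = X 1 ^ p ^ n := by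
  induction n with
  | zero => simp [F]
  | succ n ih =>
    rw [F, map_sub, map_pow, map_mul, ih, map_natCast, map_pow, aeval_X]
    simp [zero_pow (pow_ne_zero n hp.out.ne_zero), ← pow_mul, ← pow_succ]

theorem Fxy_succ (n : ℕ) : Fxy p (n + 1) = Fxy p n ^ p - (p : Rpoly p) * X 1 ^ p ^ n := by
  rw [Fxy, F, map_sub, map_pow, map_mul, map_natCast, aeval_X_one_zero_F, map_pow, map_X, Fxy]

variable {p} {φ : Rpoly p →ₐ[Kloc p] Rpoly p}

theorem map_Fxy (hx : φ (X 0) = X 0 ^ p - (p : Rpoly p) * X 1) (hy : φ (X 1) = X 1 ^ p)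
    (n : ℕ) : φ (Fxy p n) = Fxy p (n + 1) := by
  induction n with
  | zero => simpa [Fxy_succ, Fxy, F] using hx
  | succ n ih =>
    rw [Fxy_succ, map_sub, map_mul, map_pow, map_pow, ih, map_natCast, hy, Fxy_succ p (n + 1),
      ← pow_mul, ← pow_succ']

theorem isFrobeniusLift_of_map_X (hx : φ (X 0) = X 0 ^ p - (p : Rpoly p) * X 1)
    (hy : φ (X 1) = X 1 ^ p) : IsFrobeniusLift p (φ : Rpoly p →+* Rpoly p) := by
  refine IsFrobeniusLift.mvPolynomial hp.out
    ((IsFrobeniusLift.int_id hp.out).localization_id _) φ fun i => ?_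
  fin_cases i
  · exact ⟨X 1, trivial, by simp [hx]⟩
  · exact ⟨0, trivial, by simp [hy]⟩

variable (p) in
def generatorsJ (e : ℕ) : Set (Rpoly p) :=
  (Set.range fun n : Fin (e + 1) => (p : Rpoly p) ^ (e - (n : ℕ)) * Fxy p n) ∪ {X 1 ^ p ^ e}

variable {e : ℕ}

theorem natCast_pow_mul_Fxy_mem_span {n : ℕ} (hn : n ≤ e) :
    (p : Rpoly p) ^ (e - n) * Fxy p n ∈ Ideal.span (generatorsJ p e) :=
  Ideal.subset_span (Or.inl ⟨⟨n, Nat.lt_succ_of_le hn⟩, rfl⟩)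

theorem X_one_pow_mem_span : (X 1 : Rpoly p) ^ p ^ e ∈ Ideal.span (generatorsJ p e) :=
  Ideal.subset_span (Or.inr rfl)

theorem Fxy_succ_mem_span : Fxy p (e + 1) ∈ Ideal.span (generatorsJ p e) := by
  have hFe := natCast_pow_mul_Fxy_mem_span (p := p) (le_refl e)
  rw [Nat.sub_self, pow_zero, one_mul] at hFe
  rw [Fxy_succ]
  exact sub_mem (Ideal.pow_mem_of_mem _ hFe p hp.out.pos)
    (Ideal.mul_mem_left _ _ X_one_pow_mem_span)

theorem map_mem_span_generatorsJ (hx : φ (X 0) = X 0 ^ p - (p : Rpoly p) * X 1)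
    (hy : φ (X 1) = X 1 ^ p) :
    ∀ s ∈ generatorsJ p e, φ s ∈ Ideal.span (generatorsJ p e) := by
  rintro s (⟨⟨n, hn⟩, rfl⟩ | rfl)
  · rw [map_mul, map_pow, map_natCast, map_Fxy hx hy]
    obtain rfl | hlt := (Nat.le_of_lt_succ hn).eq_or_lt
    · rw [Nat.sub_self, pow_zero, one_mul]
      exact Fxy_succ_mem_span
    · rw [show e - n = e - (n + 1) + 1 by omega, pow_succ', mul_assoc]
      exact Ideal.mul_mem_left _ _ (natCast_pow_mul_Fxy_mem_span hlt)
  · rw [map_pow, hy, ← pow_mul, ← pow_succ', pow_succ, pow_mul]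
    exact Ideal.pow_mem_of_mem _ X_one_pow_mem_span p hp.out.pos

theorem hasThetaIn_span_generatorsJ (hx : φ (X 0) = X 0 ^ p - (p : Rpoly p) * X 1)
    (hy : φ (X 1) = X 1 ^ p) :
    ∀ s ∈ generatorsJ p e, HasThetaIn p φ (Ideal.span (generatorsJ p e)) s := by
  rintro s (⟨⟨n, hn⟩, rfl⟩ | rfl)
  · dsimp only
    obtain rfl | hlt := (Nat.le_of_lt_succ hn).eq_or_lt
    · refine ⟨X 1 ^ p ^ n, X_one_pow_mem_span, ?_⟩
      rw [RingHom.coe_coe, Nat.sub_self, pow_zero, one_mul, map_Fxy hx hy, Fxy_succ]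
      ring
    · obtain ⟨k, hk⟩ : ∃ k, e - n = k + 1 := ⟨e - (n + 1), by omega⟩
      rw [hk]
      refine HasThetaIn.natCast_pow_mul hp.out.two_le
        (hk ▸ natCast_pow_mul_Fxy_mem_span hlt.le) ?_
      rw [RingHom.coe_coe, map_Fxy hx hy, show k = e - (n + 1) by omega]
      exact natCast_pow_mul_Fxy_mem_span hlt
  · exact ⟨0, zero_mem _, by simp [hy, ← pow_mul, ← pow_succ, pow_succ']⟩

end

theorem J_stable_theta_general (p : ℕ) [hp : Fact p.Prime]
    (φ : Rpoly p →ₐ[Kloc p] Rpoly p)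
    (hx : φ (X 0) = X 0 ^ p - (p : Rpoly p) * X 1)
    (hy : φ (X 1) = X 1 ^ p)
    (e : ℕ)
    (J : Ideal (Rpoly p))
    (hJ : J = Ideal.span
      ((Set.range fun n : Fin (e + 1) => (p : Rpoly p) ^ (e - (n : ℕ)) * Fxy p n) ∪
        {X 1 ^ p ^ e})) :
    ∀ f ∈ J, ∃ g ∈ J, (p : Rpoly p) * g = f ^ p - φ f := by
  subst hJ
  exact fun f hf => HasThetaIn.of_mem_span hp.out (isFrobeniusLift_of_map_X hx hy)
    (map_mem_span_generatorsJ hx hy) (hasThetaIn_span_generatorsJ hx hy) hf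

/-- Let `J ⊆ R` be the ideal generated by the `p^{e-n}·F_n(x,y)` for `0 ≤ n ≤ e`
together with `y^{p^e}`. Then `J` is stable under `θ^p`: for every `f ∈ J` there is
`g ∈ J` with `p·g = f^p - φ(f)`. -/
theorem J_stable_theta (p : ℕ) [hp : Fact p.Prime]
    (φ : Rpoly p →ₐ[Kloc p] Rpoly p)
    (hx : φ (X 0) = X 0 ^ p - (p : Rpoly p) * X 1)
    (hy : φ (X 1) = X 1 ^ p)
    (e : ℕ) (he : 1 ≤ e)
    (J : Ideal (Rpoly p))
    (hJ : J = Ideal.span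
      ((Set.range fun n : Fin (e + 1) => (p : Rpoly p) ^ (e - (n : ℕ)) * Fxy p n) ∪
        {X 1 ^ p ^ e})) :
    ∀ f ∈ J, ∃ g ∈ J, (p : Rpoly p) * g = f ^ p - φ f :=
  J_stable_theta_general p (hp := hp) φ hx hy e J hJ
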